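/- arXiv:2001.06500 — 8 statements merged into one kernel-verified Lean document; each statement's English description precedes it below -/
import Mathlib

section
/- Let w ∈ ℂ[x₁,...,xₙ] and v ∈ ℂ[y₁,...,yₘ] be polynomials, each with an isolated singularity at the origin (i.e., finite-dimensional Milnor algebra). Then the Milnor number of the Thom–Sebastiani sum w + v ∈ ℂ[x₁,...,xₙ,y₁,...,yₘ] equals the product μ(w)·μ(v). -/
open MvPolynomial

/-- The Milnor algebra (Jacobian ring) of a polynomial `w`. -/
noncomputable def milnorAlgebra {σ : Type} (w : MvPolynomial σ ℂ) : Type :=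
  MvPolynomial σ ℂ ⧸ Ideal.span (Set.range fun i : σ => pderiv i w)

noncomputable instance {σ : Type} (w : MvPolynomial σ ℂ) : CommRing (milnorAlgebra w) :=
  Ideal.Quotient.commRing _

noncomputable instance {σ : Type} (w : MvPolynomial σ ℂ) : Algebra ℂ (milnorAlgebra w) :=
  Ideal.Quotient.algebra ℂ

/-- The Milnor number: the ℂ-dimension of the Milnor algebra. -/
noncomputable def milnor {σ : Type} (w : MvPolynomial σ ℂ) : ℕ :=
  Module.finrank ℂ (milnorAlgebra w)

noncomputable instance {σ : Type} (w : MvPolynomial σ ℂ) :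
    @Module ℂ (milnorAlgebra w) _ AddCommGroup.toAddCommMonoid :=
  Algebra.toModule

open TensorProduct Algebra.TensorProduct

/-!
Under `k[x, y] ≅ k[x] ⊗ k[y]`, the partial derivatives of `w(x) + v(y)` are the `∂w/∂xᵢ ⊗ 1` and
the `1 ⊗ ∂v/∂yⱼ`, so its Jacobian ideal is `J_w ⊗ k[y] + k[x] ⊗ J_v`. Quotients commute with tensor
products, hence the Milnor algebra of the sum is the tensor product of the Milnor algebras, and
dimensions multiply.
-/

noncomputable def Ideal.quotientTensorQuotientEquiv {R A B : Type*} [CommRing R] [CommRing A]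
    [CommRing B] [Algebra R A] [Algebra R B] (I : Ideal A) (J : Ideal B) :
    (A ⧸ I) ⊗[R] (B ⧸ J) ≃ₗ[R]
      (A ⊗[R] B) ⧸ (I.map (includeLeft : A →ₐ[R] A ⊗[R] B) ⊔ J.map includeRight) :=
  TensorProduct.congr (Submodule.Quotient.restrictScalarsEquiv R I).symm
      (Submodule.Quotient.restrictScalarsEquiv R J).symm ≪≫ₗ
    TensorProduct.quotientTensorQuotientEquiv (I.restrictScalars R) (J.restrictScalars R) ≪≫ₗ
    Submodule.quotEquivOfEq _ _ (by
      rw [Submodule.restrictScalars_sup, Ideal.map_includeLeft_eq, Ideal.map_includeRight_eq]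
      rfl) ≪≫ₗ
    Submodule.Quotient.restrictScalarsEquiv R _

namespace MvPolynomial

theorem pderiv_rename_of_notMem_range {R σ τ : Type*} [CommSemiring R]
    {f : σ → τ} {i : τ} (hi : i ∉ Set.range f) (p : MvPolynomial σ R) :
    pderiv i (rename f p) = 0 :=
  pderiv_eq_zero_of_notMem_vars fun h => by
    obtain ⟨j, -, rfl⟩ := mem_vars_rename f p h
    exact hi ⟨j, rfl⟩

noncomputable def jacobianIdeal {R σ : Type*} [CommSemiring R] (w : MvPolynomial σ R) :
    Ideal (MvPolynomial σ R) :=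
  Ideal.span (Set.range fun i => pderiv i w)

theorem jacobianIdeal_rename_inl_add_rename_inr {R σ ι : Type*} [CommSemiring R]
    (w : MvPolynomial σ R) (v : MvPolynomial ι R) :
    jacobianIdeal (rename Sum.inl w + rename Sum.inr v) =
      (jacobianIdeal w).map (rename Sum.inl) ⊔ (jacobianIdeal v).map (rename Sum.inr) := by
  have hpderiv : (fun i => pderiv i (rename Sum.inl w + rename Sum.inr v)) =
      Sum.elim (fun i => rename Sum.inl (pderiv i w)) (fun j => rename Sum.inr (pderiv j v)) := by
    funext i
    rcases i with i | j
    · simp [pderiv_rename Sum.inl_injective, pderiv_rename_of_notMem_range]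
    · simp [pderiv_rename Sum.inr_injective, pderiv_rename_of_notMem_range]
  rw [jacobianIdeal, hpderiv, Set.Sum.elim_range, Ideal.span_union, jacobianIdeal, jacobianIdeal,
    Ideal.map_span, Ideal.map_span, ← Set.range_comp, ← Set.range_comp]
  rfl

theorem tensorEquivSum_comp_includeLeft {R σ ι : Type*} [CommSemiring R] :
    (tensorEquivSum R σ ι R).toAlgHom.comp includeLeft = rename Sum.inl := by
  ext; simp

theorem tensorEquivSum_comp_includeRight {R σ ι : Type*} [CommSemiring R] :
    (tensorEquivSum R σ ι R).toAlgHom.comp includeRight = rename Sum.inr := by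
  ext; simp

noncomputable def tensorQuotientJacobianIdealEquiv {R σ ι : Type*} [CommRing R]
    (w : MvPolynomial σ R) (v : MvPolynomial ι R) :
    (MvPolynomial σ R ⧸ jacobianIdeal w) ⊗[R] (MvPolynomial ι R ⧸ jacobianIdeal v) ≃ₗ[R]
      MvPolynomial (σ ⊕ ι) R ⧸
        jacobianIdeal (rename Sum.inl w + rename Sum.inr v : MvPolynomial (σ ⊕ ι) R) :=
  Ideal.quotientTensorQuotientEquiv _ _ ≪≫ₗ
    (Ideal.quotientEquivAlg _ _ (tensorEquivSum R σ ι R) (by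
      rw [jacobianIdeal_rename_inl_add_rename_inr, ← tensorEquivSum_comp_includeLeft,
        ← tensorEquivSum_comp_includeRight, ← Ideal.map_mapₐ, ← Ideal.map_mapₐ, Ideal.map_sup]
      rfl)).toLinearEquiv

end MvPolynomial

theorem milnor_thom_sebastiani_general (n m : ℕ)
    (w : MvPolynomial (Fin n) ℂ) (v : MvPolynomial (Fin m) ℂ) :
    milnor ((rename Sum.inl w + rename Sum.inr v : MvPolynomial (Fin n ⊕ Fin m) ℂ))
      = milnor w * milnor v :=
  (tensorQuotientJacobianIdealEquiv w v).finrank_eq.symm.trans Module.finrank_tensorProduct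

/-- Multiplicativity of the Milnor number under Thom–Sebastiani sums. -/
theorem milnor_thom_sebastiani (n m : ℕ)
    (w : MvPolynomial (Fin n) ℂ) (v : MvPolynomial (Fin m) ℂ)
    (hw : FiniteDimensional ℂ (milnorAlgebra w))
    (hv : FiniteDimensional ℂ (milnorAlgebra v)) :
    milnor ((rename Sum.inl w + rename Sum.inr v : MvPolynomial (Fin n ⊕ Fin m) ℂ))
      = milnor w * milnor v :=
  milnor_thom_sebastiani_general n m w v
end

section
/- Let n ≥ 1 and a₁,...,aₙ, b be integers with aᵢ ≥ 2 and 2 ≤ b ≤ aₙ. Define d₁ = (−1)ⁿ b, d_j = (−1)^{j+n+1} b·∏_{i=1}^{j-1} aᵢ for 2 ≤ j ≤ n, and d_{n+1} = a₁⋯aₙ + (−1)^{n+1}. Then Σ_{i=1}^{n+1} dᵢ > 0. -/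
open Finset

lemma prod_one_le_aux (a : ℕ → ℤ) (k : ℕ) (h : ∀ i, 1 ≤ i → i ≤ k → 2 ≤ a i) :
    1 ≤ ∏ i ∈ Icc 1 k, a i := by
  calc (1:ℤ) = ∏ _i ∈ Icc 1 k, (1:ℤ) := by simp
    _ ≤ ∏ i ∈ Icc 1 k, a i := by
        apply Finset.prod_le_prod
        · intro i _; norm_num
        · intro i hi
          simp only [mem_Icc] at hi
          linarith [h i hi.1 hi.2]

lemma U_bounds (a : ℕ → ℤ) (n : ℕ) (hn : 1 ≤ n) :
    (∀ i, 1 ≤ i → i ≤ n → 2 ≤ a i) →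
    1 - (-1 : ℤ) ^ n ≤ 2 * ∑ j ∈ Icc 1 n, (-1 : ℤ) ^ (j + n) * ∏ i ∈ Icc 1 (j - 1), a i ∧
    2 * ∑ j ∈ Icc 1 n, (-1 : ℤ) ^ (j + n) * ∏ i ∈ Icc 1 (j - 1), a i
      ≤ 2 * ∏ i ∈ Icc 1 (n - 1), a i - 1 - (-1 : ℤ) ^ n := by
  induction n, hn using Nat.le_induction with
  | base =>
    intro _
    norm_num
  | succ n hn ih =>
    intro hA
    have hA' : ∀ i, 1 ≤ i → i ≤ n → 2 ≤ a i := fun i h1 h2 => hA i h1 (by omega)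
    obtain ⟨ihl, ihr⟩ := ih hA'
    have hsum : ∑ j ∈ Icc 1 (n + 1), (-1 : ℤ) ^ (j + (n + 1)) * ∏ i ∈ Icc 1 (j - 1), a i
        = (∏ i ∈ Icc 1 n, a i)
          - ∑ j ∈ Icc 1 n, (-1 : ℤ) ^ (j + n) * ∏ i ∈ Icc 1 (j - 1), a i := by
      rw [Finset.sum_Icc_succ_top (by omega : 1 ≤ n + 1)]
      have hsgn : ∀ j, (-1 : ℤ) ^ (j + (n + 1)) = -(-1 : ℤ) ^ (j + n) := by
        intro j
        rw [show j + (n + 1) = (j + n) + 1 by ring, pow_succ]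
        ring
      simp only [hsgn]
      rw [show (n + 1) - 1 = n from rfl]
      rw [show -(-1 : ℤ) ^ ((n+1) + n) = 1 from by
        rw [show (n+1) + n = 2*n + 1 by ring, pow_succ, pow_mul]
        norm_num]
      simp only [neg_mul, Finset.sum_neg_distrib]
      ring
    have hP1 : (1 : ℤ) ≤ ∏ i ∈ Icc 1 (n - 1), a i :=
      prod_one_le_aux a (n-1) (fun i h1 h2 => hA' i h1 (by omega))
    have hPn : ∏ i ∈ Icc 1 n, a i = (∏ i ∈ Icc 1 (n - 1), a i) * a n := by
      have := Finset.prod_Icc_succ_top (show 1 ≤ (n-1) + 1 by omega) a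
      rw [show (n-1) + 1 = n by omega] at this
      exact this
    have han : 2 ≤ a n := hA' n hn le_rfl
    have h2P : 2 * ∏ i ∈ Icc 1 (n - 1), a i ≤ ∏ i ∈ Icc 1 n, a i := by
      rw [hPn]
      nlinarith
    have hpow : (-1 : ℤ) ^ (n + 1) = -(-1 : ℤ) ^ n := by rw [pow_succ]; ring
    rw [hsum, hpow, show (n + 1) - 1 = n from rfl]
    constructor
    · linarith
    · linarith

/-- For `aᵢ ≥ 2` and `2 ≤ b ≤ aₙ`, with `d₁ = (−1)ⁿ b`,
`d_j = (−1)^{j+n+1} b ∏_{i=1}^{j-1} aᵢ` for `2 ≤ j ≤ n`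
(a formula which also yields `d₁` at `j = 1`), and
`d_{n+1} = a₁⋯aₙ + (−1)^{n+1}`, the sum `Σ dᵢ` is positive. -/
theorem sum_d_pos_loop (n : ℕ) (hn : 1 ≤ n) (a : ℕ → ℤ) (b : ℤ)
    (ha : ∀ i, 1 ≤ i → i ≤ n → 2 ≤ a i) (hb : 2 ≤ b) (hba : b ≤ a n) :
    0 < (∑ j ∈ Icc 1 n, (-1 : ℤ) ^ (j + n + 1) * b * ∏ i ∈ Icc 1 (j - 1), a i)
        + ((∏ i ∈ Icc 1 n, a i) + (-1 : ℤ) ^ (n + 1)) := by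
  obtain ⟨hUl, hUr⟩ := U_bounds a n hn ha
  set U := ∑ j ∈ Icc 1 n, (-1 : ℤ) ^ (j + n) * ∏ i ∈ Icc 1 (j - 1), a i with hU
  have hsum : ∑ j ∈ Icc 1 n, (-1 : ℤ) ^ (j + n + 1) * b * ∏ i ∈ Icc 1 (j - 1), a i
      = -b * U := by
    rw [hU, Finset.mul_sum]
    apply Finset.sum_congr rfl
    intro j _
    rw [pow_succ]
    ring
  have hP1 : (1 : ℤ) ≤ ∏ i ∈ Icc 1 (n - 1), a i :=
    prod_one_le_aux a (n-1) (fun i h1 h2 => ha i h1 (by omega))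
  have hPn : ∏ i ∈ Icc 1 n, a i = (∏ i ∈ Icc 1 (n - 1), a i) * a n := by
    have := Finset.prod_Icc_succ_top (show 1 ≤ (n-1) + 1 by omega) a
    rw [show (n-1) + 1 = n by omega] at this
    exact this
  have hbP : b * (∏ i ∈ Icc 1 (n - 1), a i) ≤ ∏ i ∈ Icc 1 n, a i := by
    rw [hPn]; nlinarith
  have hpow : (-1 : ℤ) ^ (n + 1) = -(-1 : ℤ) ^ n := by rw [pow_succ]; ring
  have hmul := mul_le_mul_of_nonneg_left hUr (by linarith : (0:ℤ) ≤ b)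
  rw [hsum, hpow]
  rcases neg_one_pow_eq_or ℤ n with h | h <;> rw [h] at hUl hUr hmul ⊢ <;> nlinarith
end

section
/- Let n ≥ 1 and a₁,...,aₙ, b be integers with aᵢ ≥ 2 and 2 ≤ b ≤ aₙ. Define d_j = (−1)^{n+j-1} b·∏_{i=1}^{j-1} aᵢ for 1 ≤ j ≤ n, and d_{n+1} = a₁⋯aₙ. Then Σ_{i=1}^{n+1} dᵢ ≥ 0. -/
open Finset

lemma sum_d_aux (b : ℤ) (hb : 0 ≤ b) :
    ∀ n, 1 ≤ n → ∀ a : ℕ → ℤ, (∀ i, 1 ≤ i → i ≤ n → 2 ≤ a i) →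
    -(b * ∏ i ∈ Icc 1 (n - 1), a i)
        ≤ (∑ j ∈ Icc 1 n, (-1 : ℤ) ^ (n + j - 1) * b * ∏ i ∈ Icc 1 (j - 1), a i) ∧
    (∑ j ∈ Icc 1 n, (-1 : ℤ) ^ (n + j - 1) * b * ∏ i ∈ Icc 1 (j - 1), a i) ≤ 0 := by
  intro n hn
  induction n, hn using Nat.le_induction with
  | base =>
    intro a ha
    simp
    linarith
  | succ n hn ih =>
    intro a ha
    obtain ⟨h1, h2⟩ := ih a (fun i hi1 hi2 => ha i hi1 (by omega))
    obtain ⟨m, rfl⟩ : ∃ m, n = m + 1 := ⟨n - 1, by omega⟩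
    have hQ : (0 : ℤ) ≤ ∏ i ∈ Icc 1 m, a i := by
      apply Finset.prod_nonneg
      intro i hi
      simp only [mem_Icc] at hi
      have := ha i hi.1 (by omega)
      linarith
    have ham : 2 ≤ a (m + 1) := ha (m + 1) (by omega) (by omega)
    have hstep : (∑ j ∈ Icc 1 (m + 1 + 1), (-1 : ℤ) ^ (m + 1 + 1 + j - 1) * b * ∏ i ∈ Icc 1 (j - 1), a i)
        = -(∑ j ∈ Icc 1 (m + 1), (-1 : ℤ) ^ (m + 1 + j - 1) * b * ∏ i ∈ Icc 1 (j - 1), a i)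
          - b * ∏ i ∈ Icc 1 (m + 1), a i := by
      rw [Finset.sum_Icc_succ_top (by omega)]
      have hc : ∀ j ∈ Icc 1 (m + 1),
          (-1 : ℤ) ^ (m + 1 + 1 + j - 1) * b * ∏ i ∈ Icc 1 (j - 1), a i
          = -((-1 : ℤ) ^ (m + 1 + j - 1) * b * ∏ i ∈ Icc 1 (j - 1), a i) := by
        intro j hj
        simp only [mem_Icc] at hj
        have he : m + 1 + 1 + j - 1 = (m + 1 + j - 1) + 1 := by omega
        rw [he, pow_succ]
        ring
      rw [Finset.sum_congr rfl hc, Finset.sum_neg_distrib]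
      have he2 : m + 1 + 1 + (m + 1 + 1) - 1 = 2 * (m + 1) + 1 := by omega
      have he3 : m + 1 + 1 - 1 = m + 1 := by omega
      rw [he2, he3]
      have : (-1 : ℤ) ^ (2 * (m + 1) + 1) = -1 := Odd.neg_one_pow ⟨m + 1, by ring⟩
      rw [this]
      ring
    rw [hstep]
    have hP : (∏ i ∈ Icc 1 (m + 1), a i) = (∏ i ∈ Icc 1 m, a i) * a (m + 1) :=
      Finset.prod_Icc_succ_top (by omega) a
    simp only [Nat.add_sub_cancel] at h1 ⊢
    rw [hP]
    constructor
    · linarith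
    · nlinarith [mul_nonneg hb hQ]

/-- For `aᵢ ≥ 2` and `2 ≤ b ≤ aₙ`, with
`d_j = (−1)^{n+j-1} b ∏_{i=1}^{j-1} aᵢ` for `1 ≤ j ≤ n` and `d_{n+1} = a₁⋯aₙ`,
the sum `Σ dᵢ` is nonnegative. -/
theorem sum_d_nonneg_chain (n : ℕ) (hn : 1 ≤ n) (a : ℕ → ℤ) (b : ℤ)
    (ha : ∀ i, 1 ≤ i → i ≤ n → 2 ≤ a i) (hb : 2 ≤ b) (hba : b ≤ a n) :
    0 ≤ (∑ j ∈ Icc 1 n, (-1 : ℤ) ^ (n + j - 1) * b * ∏ i ∈ Icc 1 (j - 1), a i)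
        + ∏ i ∈ Icc 1 n, a i := by
  obtain ⟨h1, h2⟩ := sum_d_aux b (by linarith) n hn a ha
  obtain ⟨m, rfl⟩ : ∃ m, n = m + 1 := ⟨n - 1, by omega⟩
  have he5 : m + 1 - 1 = m := by omega
  rw [he5] at h1
  have hQ : (0 : ℤ) ≤ ∏ i ∈ Icc 1 m, a i := by
    apply Finset.prod_nonneg
    intro i hi
    simp only [mem_Icc] at hi
    have := ha i hi.1 (by omega)
    linarith
  have hP : (∏ i ∈ Icc 1 (m + 1), a i) = (∏ i ∈ Icc 1 m, a i) * a (m + 1) :=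
    Finset.prod_Icc_succ_top (by omega) a
  rw [hP]
  nlinarith [mul_nonneg hQ (by linarith : (0:ℤ) ≤ a (m+1) - b)]
end

section
/- Let a₁,...,aₙ ≥ 2 and b ≥ 2 be integers, w₊ the loop polynomial x₁^{a₁}x₂ + ... + xₙ^{aₙ}x₁ and w₋ the chain-type polynomial x₁^{a₁}x₂ + ... + x_{n-1}^{a_{n-1}} + x₁x_{n+1}^{b} (transposed appropriately). With d₁ = (−1)ⁿb, d_j = (−1)^{j+n+1}b∏_{i=1}^{j-1}aᵢ for 2 ≤ j ≤ n, d_{n+1} = a₁⋯aₙ + (−1)^{n+1}, one has μ(w₊ᵀ) − μ(w₋ᵀ) = Σ_{i=1}^{n+1} dᵢ, where μ(w₊ᵀ) = a₁⋯aₙ and μ(w₋ᵀ) is given by the chain Milnor number formula. -/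
open Finset

/-- The chain Milnor number formula: for a (transposed) chain polynomial with
exponents `t₁, …, tₘ` (given here as `t 1, …, t m`),
`μ = ∏ tᵢ − Σ_k (t_{2k-1} − 1) ∏_{i<2k-1} tᵢ` for `m` even and
`μ = −1 + ∏ tᵢ − Σ_k (t_{2k} − 1) ∏_{i<2k} tᵢ` for `m` odd. -/
noncomputable def chainMilnor (m : ℕ) (t : ℕ → ℤ) : ℤ :=
  if Even m then
    (∏ i ∈ Icc 1 m, t i) -
      ∑ k ∈ Icc 1 (m / 2), (t (2 * k - 1) - 1) * ∏ i ∈ Icc 1 (2 * k - 2), t i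
  else
    -1 + (∏ i ∈ Icc 1 m, t i) -
      ∑ k ∈ Icc 1 ((m - 1) / 2), (t (2 * k) - 1) * ∏ i ∈ Icc 1 (2 * k - 1), t i

lemma chainRec2 (m : ℕ) (t : ℕ → ℤ) :
    chainMilnor (m + 2) t
      = chainMilnor m t + (∏ i ∈ Icc 1 m, t i) * t (m+1) * (t (m+2) - 1) := by
  unfold chainMilnor
  have hprod : (∏ i ∈ Icc 1 (m+2), t i) = (∏ i ∈ Icc 1 m, t i) * t (m+1) * t (m+2) := by
    rw [Finset.prod_Icc_succ_top (by omega), Finset.prod_Icc_succ_top (by omega)]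
  by_cases h : Even m
  · have hm : m % 2 = 0 := Nat.even_iff.mp h
    rw [if_pos (Nat.even_iff.mpr (by omega)), if_pos h]
    have hdiv : (m+2)/2 = m/2 + 1 := by omega
    rw [hdiv, Finset.sum_Icc_succ_top (by omega)]
    have h1 : 2 * (m/2 + 1) - 1 = m + 1 := by omega
    have h2 : 2 * (m/2 + 1) - 2 = m := by omega
    rw [h1, h2, hprod]; ring
  · have hm : m % 2 = 1 := Nat.odd_iff.mp (Nat.not_even_iff_odd.mp h)
    rw [if_neg (by rw [Nat.even_iff]; omega), if_neg h]
    have hdiv : (m+2-1)/2 = (m-1)/2 + 1 := by omega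
    rw [hdiv, Finset.sum_Icc_succ_top (by omega)]
    have h1 : 2 * ((m-1)/2 + 1) = m + 1 := by omega
    rw [h1, Nat.add_sub_cancel, hprod]; ring

lemma chainRec1 (m : ℕ) (t : ℕ → ℤ) :
    chainMilnor (m + 1) t + chainMilnor m t = ∏ i ∈ Icc 1 (m + 1), t i := by
  induction m with
  | zero => simp [chainMilnor]
  | succ m ih =>
    have h2 := chainRec2 m t
    have hp : (∏ i ∈ Icc 1 (m+1), t i) = (∏ i ∈ Icc 1 m, t i) * t (m+1) :=
      Finset.prod_Icc_succ_top (by omega) _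
    have hp2 : (∏ i ∈ Icc 1 (m+2), t i) = (∏ i ∈ Icc 1 (m+1), t i) * t (m+2) :=
      Finset.prod_Icc_succ_top (by omega) _
    have : chainMilnor (m+1+1) t = chainMilnor m t + (∏ i ∈ Icc 1 m, t i) * t (m+1) * (t (m+2) - 1) := h2
    rw [this, hp2, hp]
    nlinarith [ih]

lemma chainClosed (t : ℕ → ℤ) (m : ℕ) :
    chainMilnor m t = (-1) ^ m + ∑ j ∈ Icc 1 m, (-1 : ℤ) ^ (j + m) * ∏ i ∈ Icc 1 j, t i := by
  induction m with
  | zero => simp [chainMilnor]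
  | succ m ih =>
    have h1 := chainRec1 m t
    have h2 : chainMilnor (m+1) t = (∏ i ∈ Icc 1 (m+1), t i) - chainMilnor m t := by linarith
    rw [h2, ih, Finset.sum_Icc_succ_top (by omega : 1 ≤ m + 1)]
    have h3 : ∀ j ∈ Icc 1 m, (-1:ℤ)^(j+(m+1)) * ∏ i ∈ Icc 1 j, t i
        = -((-1:ℤ)^(j+m) * ∏ i ∈ Icc 1 j, t i) := by
      intro j _
      rw [show j+(m+1) = (j+m)+1 by ring, pow_succ]; ring
    rw [Finset.sum_congr rfl h3, Finset.sum_neg_distrib]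
    have h4 : (-1:ℤ)^(m+1+(m+1)) = 1 := by
      rw [show m+1+(m+1) = 2*(m+1) by ring, pow_mul]; norm_num
    rw [h4, pow_succ]; ring

/-- `μ(w₊ᵀ) − μ(w₋ᵀ) = Σ_{i=1}^{n+1} dᵢ`, where `μ(w₊ᵀ) = a₁⋯aₙ` is the Milnor
number of the transposed loop polynomial, `μ(w₋ᵀ)` is given by the chain Milnor
number formula applied to `w₋ = x₁^{a₁}x₂ + ⋯ + x_{n-1}^{a_{n-1}} + x₁x_{n+1}^{b}`
(a chain with exponents `(b, a₁, …, a_{n-1})`), and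
`d₁ = (−1)ⁿ b`, `d_j = (−1)^{j+n+1} b ∏_{i=1}^{j-1} aᵢ` for `2 ≤ j ≤ n`
(the same formula also gives `d₁`), `d_{n+1} = a₁⋯aₙ + (−1)^{n+1}`. -/
theorem milnor_difference_eq_sum_d (n : ℕ) (hn : 1 ≤ n) (a : ℕ → ℤ) (b : ℤ)
    (ha : ∀ i, 1 ≤ i → i ≤ n → 2 ≤ a i) (hb : 2 ≤ b) :
    (∏ i ∈ Icc 1 n, a i)
        - chainMilnor n (fun j => if j = 1 then b else a (j - 1))
      = (∑ j ∈ Icc 1 n, (-1 : ℤ) ^ (j + n + 1) * b * ∏ i ∈ Icc 1 (j - 1), a i)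
        + ((∏ i ∈ Icc 1 n, a i) + (-1 : ℤ) ^ (n + 1)) := by
  set t : ℕ → ℤ := fun j => if j = 1 then b else a (j - 1) with ht
  have key : ∀ j : ℕ, 1 ≤ j → (∏ i ∈ Icc 1 j, t i) = b * ∏ i ∈ Icc 1 (j - 1), a i := by
    intro j hj
    induction j with
    | zero => omega
    | succ j ih =>
      rcases Nat.eq_or_lt_of_le hj with h | h
      · simp [← h, ht]
      · have hj1 : 1 ≤ j := by omega
        rw [Finset.prod_Icc_succ_top (by omega), ih hj1, Nat.add_sub_cancel]
        obtain ⟨k, rfl⟩ : ∃ k, j = k + 1 := ⟨j - 1, by omega⟩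
        rw [Finset.prod_Icc_succ_top (by omega : 1 ≤ k + 1) a]
        have : t (k + 1 + 1) = a (k + 1) := by simp [ht]
        rw [this, Nat.add_sub_cancel]; ring
  have hsum : (∑ j ∈ Icc 1 n, (-1 : ℤ) ^ (j + n + 1) * b * ∏ i ∈ Icc 1 (j - 1), a i)
      = -∑ j ∈ Icc 1 n, (-1 : ℤ) ^ (j + n) * ∏ i ∈ Icc 1 j, t i := by
    rw [← Finset.sum_neg_distrib]
    refine Finset.sum_congr rfl fun j hj => ?_
    rw [key j (Finset.mem_Icc.mp hj).1, pow_succ]; ring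
  rw [hsum, chainClosed, pow_succ]; ring
end

section
/- Let W be a polynomial in x₁,...,xₙ admitting integer weights s₁,...,sₙ making W quasihomogeneous of some degree, with sᵢ ≠ 0. Then the exact sequence 1 → Γ_{Wᵢ} → Γ_W → 𝔾ₘ → 1 is also right exact, i.e., the character χᵢ: Γ_W → 𝔾ₘ (projection to the i-th coordinate) is surjective. -/
open MvPolynomial

/-- The maximal diagonal symmetry group of a polynomial `W`: pairs `(t, s)`
with `W(t·x) = s·W(x)`; the last coordinate is the grading coordinate. -/
def symmetryGroup {σ : Type} (W : MvPolynomial σ ℂ) : Set ((σ → ℂˣ) × ℂˣ) :=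
  {p | aeval (fun j : σ => (C ((p.1 j : ℂ)) * X j : MvPolynomial σ ℂ)) W
        = C ((p.2 : ℂ)) * W}

lemma zpow_finset_sum {G : Type*} [CommGroup G] {α : Type*} (b : G) (sFin : Finset α)
    (f : α → ℤ) : b ^ (∑ a ∈ sFin, f a) = ∏ a ∈ sFin, b ^ f a := by
  induction sFin using Finset.cons_induction with
  | empty => simp
  | cons a t ha ih => rw [Finset.sum_cons, Finset.prod_cons, zpow_add, ih]

lemma exists_zpow_eq (c : ℂˣ) {z : ℤ} (hz : z ≠ 0) : ∃ b : ℂˣ, b ^ z = c := by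
  obtain ⟨x, hx⟩ := IsAlgClosed.exists_pow_nat_eq (c : ℂ) (n := z.natAbs)
    (Int.natAbs_pos.mpr hz)
  have hx0 : x ≠ 0 := by
    rintro rfl
    rw [zero_pow (Int.natAbs_ne_zero.mpr hz)] at hx
    exact c.ne_zero hx.symm
  set b : ℂˣ := Units.mk0 x hx0 with hb
  have hbn : b ^ (z.natAbs : ℤ) = c := by
    rw [zpow_natCast]; exact Units.ext (by push_cast [hb]; exact hx)
  rcases Int.natAbs_eq z with h | h
  · exact ⟨b, by rw [← h] at hbn; exact hbn⟩
  · exact ⟨b⁻¹, by rw [h, zpow_neg, inv_zpow, inv_inv]; exact hbn⟩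

/-- If `W` is quasihomogeneous of degree `d` for integer weights `s` with
`sᵢ ≠ 0`, then the projection character `χᵢ : Γ_W → 𝔾ₘ` is surjective, i.e.
the sequence `1 → Γ_{Wᵢ} → Γ_W → 𝔾ₘ → 1` is also right exact. -/
theorem chi_surjective (n : ℕ) (W : MvPolynomial (Fin n) ℂ) (s : Fin n → ℤ) (d : ℤ)
    (hqh : ∀ m ∈ W.support, ∑ j : Fin n, s j * (m j : ℤ) = d)
    (i : Fin n) (hsi : s i ≠ 0) :
    ∀ c : ℂˣ, ∃ p ∈ symmetryGroup W, p.1 i = c := by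
  intro c
  obtain ⟨b, hb⟩ := exists_zpow_eq c hsi
  refine ⟨⟨fun j => b ^ s j, b ^ d⟩, ?_, hb⟩
  simp only [symmetryGroup, Set.mem_setOf_eq]
  rw [aeval_def, eval₂_eq']
  conv_rhs => rw [W.as_sum, Finset.mul_sum]
  refine Finset.sum_congr rfl fun m hm => ?_
  have key : (∏ j, ((b : ℂ) ^ s j) ^ (m j : ℕ)) = (b : ℂ) ^ d := by
    have : (∏ j, (b ^ s j) ^ (m j : ℕ)) = b ^ d := by
      rw [← hqh m hm, zpow_finset_sum]
      exact Finset.prod_congr rfl fun j _ => by rw [zpow_mul, zpow_natCast]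
    exact_mod_cast this
  rw [monomial_eq, Finsupp.prod_fintype _ _ (fun j => pow_zero _)]
  simp_rw [mul_pow, ← C_pow]
  rw [Finset.prod_mul_distrib, ← map_prod (C : ℂ →+* MvPolynomial (Fin n) ℂ), algebraMap_eq]
  have hcast : ∀ j : Fin n, ((b ^ s j : ℂˣ) : ℂ) ^ (m j : ℕ) = ((b : ℂ) ^ s j) ^ (m j : ℕ) := by
    intro j; norm_cast
  simp_rw [hcast]
  rw [key, show ((b ^ d : ℂˣ) : ℂ) = (b : ℂ) ^ d from by norm_cast]; ring
end

section
/- For W = x₁^{a₁}x₂ + ... + x_{n-1}^{a_{n-1}}xₙ + xₙ^{aₙ}x₁x_{n+1}^{b} with aᵢ, b ≥ 2, the radical of the ideal generated by all partial derivatives of W together with x_{n+1} contains x₁,...,x_{n-1}; likewise the radical of ⟨∂W, xₙ⟩ contains x₁,...,x_{n-1}. -/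
set_option maxHeartbeats 1000000


open MvPolynomial

private lemma pd_term {N : ℕ} (j u v : Fin N) (e : ℕ) :
    pderiv j ((X u : MvPolynomial (Fin N) ℂ) ^ e * X v) =
      (if u = j then (e : MvPolynomial (Fin N) ℂ) * X u ^ (e - 1) * X v else 0)
      + (if v = j then X u ^ e else 0) := by
  rw [pderiv_mul, pderiv_pow]
  by_cases hu : u = j <;> by_cases hv : v = j <;>
    simp [hu, hv, pderiv_X_self, pderiv_X_of_ne, mul_comm]

private lemma deriv_mid (n : ℕ) (a : ℕ → ℕ) (b : ℕ)
    (W : MvPolynomial (Fin (n + 1)) ℂ)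
    (hW : W = (∑ i : Fin (n - 1),
        X (Fin.castLE (by omega) i) ^ a (i : ℕ) * X (Fin.castLE (by omega) i.succ))
      + X (⟨n - 1, by omega⟩ : Fin (n + 1)) ^ a (n - 1)
          * X (⟨0, by omega⟩ : Fin (n + 1)) * X (Fin.last n) ^ b)
    {q : ℕ} (hq1 : 1 ≤ q) (hq2 : q ≤ n - 2) (hn : 2 ≤ n) :
    pderiv (⟨q, by omega⟩ : Fin (n + 1)) W =
      X (⟨q - 1, by omega⟩ : Fin (n + 1)) ^ a (q - 1)
        + (a q : MvPolynomial (Fin (n + 1)) ℂ)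
          * X (⟨q, by omega⟩ : Fin (n + 1)) ^ (a q - 1)
          * X (⟨q + 1, by omega⟩ : Fin (n + 1)) := by
  have hq' : q < n + 1 := by omega
  rw [hW, (pderiv (⟨q, hq'⟩ : Fin (n + 1))).map_add,
    map_sum (pderiv (R := ℂ) (⟨q, hq'⟩ : Fin (n + 1))) _ Finset.univ]
  have hT : pderiv (⟨q, hq'⟩ : Fin (n + 1))
      ((X (⟨n - 1, by omega⟩ : Fin (n + 1)) : MvPolynomial (Fin (n + 1)) ℂ) ^ a (n - 1)
      * X (⟨0, by omega⟩ : Fin (n + 1)) * X (Fin.last n) ^ b) = 0 := by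
    have h1 : (⟨n - 1, by omega⟩ : Fin (n + 1)) ≠ ⟨q, hq'⟩ := by simp [Fin.ext_iff]; omega
    have h2 : (⟨0, by omega⟩ : Fin (n + 1)) ≠ ⟨q, hq'⟩ := by simp [Fin.ext_iff]; omega
    have h3 : (Fin.last n) ≠ (⟨q, hq'⟩ : Fin (n + 1)) := by simp [Fin.ext_iff, Fin.last]; omega
    have h0 : ¬(0 : Fin (n + 1)) = ⟨q, hq'⟩ := by simp [Fin.ext_iff]; omega
    simp [pderiv_mul, pderiv_pow, pderiv_X_of_ne h1, pderiv_X_of_ne h2, pderiv_X_of_ne h3,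
      pderiv_X, Pi.single_apply, h0]
  rw [hT, add_zero]
  have hsum : ∀ i : Fin (n - 1),
      pderiv (⟨q, hq'⟩ : Fin (n + 1))
        ((X (Fin.castLE (by omega : n - 1 ≤ n + 1) i) : MvPolynomial (Fin (n+1)) ℂ) ^ a (i : ℕ)
        * X (Fin.castLE (by omega : n - 1 + 1 ≤ n + 1) i.succ)) =
      (if i = (⟨q, by omega⟩ : Fin (n - 1)) then
          (a q : MvPolynomial (Fin (n + 1)) ℂ) * X (⟨q, hq'⟩ : Fin (n + 1)) ^ (a q - 1)
            * X (⟨q + 1, by omega⟩ : Fin (n + 1)) else 0)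
      + (if i = (⟨q - 1, by omega⟩ : Fin (n - 1)) then
          X (⟨q - 1, by omega⟩ : Fin (n + 1)) ^ a (q - 1) else 0) := by
    intro i
    rw [pd_term]
    by_cases h1 : (i : ℕ) = q
    · have hne : ¬ (q = q - 1) := by omega
      have hi : i = (⟨q, by omega⟩ : Fin (n - 1)) := Fin.ext (by simp [h1])
      rw [hi]
      simp [Fin.castLE_mk, Fin.succ_mk, Fin.ext_iff, hne]
    · by_cases h2 : (i : ℕ) = q - 1
      · have hne : ¬ (q - 1 = q) := by omega
        have heq : q - 1 + 1 = q := by omega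
        have hi : i = (⟨q - 1, by omega⟩ : Fin (n - 1)) := Fin.ext (by simp [h2])
        rw [hi]
        simp [Fin.castLE_mk, Fin.succ_mk, Fin.ext_iff, hne, heq]
      · simp [Fin.ext_iff, h1, h2]
        omega
  rw [Finset.sum_congr rfl (fun i _ => hsum i), Finset.sum_add_distrib]
  simp only [Finset.sum_ite_eq', Finset.mem_univ, if_true]
  ring

private lemma deriv_last (n : ℕ) (a : ℕ → ℕ) (b : ℕ)
    (W : MvPolynomial (Fin (n + 1)) ℂ)
    (hW : W = (∑ i : Fin (n - 1),
        X (Fin.castLE (by omega) i) ^ a (i : ℕ) * X (Fin.castLE (by omega) i.succ))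
      + X (⟨n - 1, by omega⟩ : Fin (n + 1)) ^ a (n - 1)
          * X (⟨0, by omega⟩ : Fin (n + 1)) * X (Fin.last n) ^ b)
    (hn : 2 ≤ n) :
    pderiv (⟨n - 1, by omega⟩ : Fin (n + 1)) W =
      X (⟨n - 2, by omega⟩ : Fin (n + 1)) ^ a (n - 2)
        + (a (n - 1) : MvPolynomial (Fin (n + 1)) ℂ)
          * X (⟨n - 1, by omega⟩ : Fin (n + 1)) ^ (a (n - 1) - 1)
          * X (⟨0, by omega⟩ : Fin (n + 1)) * X (Fin.last n) ^ b := by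
  have hq' : n - 1 < n + 1 := by omega
  rw [hW, (pderiv (⟨n - 1, hq'⟩ : Fin (n + 1))).map_add,
    map_sum (pderiv (R := ℂ) (⟨n - 1, hq'⟩ : Fin (n + 1))) _ Finset.univ]
  have hT : pderiv (⟨n - 1, hq'⟩ : Fin (n + 1))
      ((X (⟨n - 1, by omega⟩ : Fin (n + 1)) : MvPolynomial (Fin (n + 1)) ℂ) ^ a (n - 1)
      * X (⟨0, by omega⟩ : Fin (n + 1)) * X (Fin.last n) ^ b) =
      (a (n - 1) : MvPolynomial (Fin (n + 1)) ℂ)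
          * X (⟨n - 1, by omega⟩ : Fin (n + 1)) ^ (a (n - 1) - 1)
          * X (⟨0, by omega⟩ : Fin (n + 1)) * X (Fin.last n) ^ b := by
    have h2 : (⟨0, by omega⟩ : Fin (n + 1)) ≠ ⟨n - 1, hq'⟩ := by simp [Fin.ext_iff]; omega
    have h3 : (Fin.last n) ≠ (⟨n - 1, hq'⟩ : Fin (n + 1)) := by
      simp [Fin.ext_iff, Fin.last]; omega
    have h0 : ¬(0 : Fin (n + 1)) = ⟨n - 1, hq'⟩ := by simp [Fin.ext_iff]; omega
    simp [pderiv_mul, pderiv_pow, pderiv_X_self, pderiv_X_of_ne h2, pderiv_X_of_ne h3,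
      pderiv_X, Pi.single_apply, h0]
    ring
  rw [hT]
  have hsum : ∀ i : Fin (n - 1),
      pderiv (⟨n - 1, hq'⟩ : Fin (n + 1))
        ((X (Fin.castLE (by omega : n - 1 ≤ n + 1) i) : MvPolynomial (Fin (n+1)) ℂ) ^ a (i : ℕ)
        * X (Fin.castLE (by omega : n - 1 + 1 ≤ n + 1) i.succ)) =
      (if i = (⟨n - 2, by omega⟩ : Fin (n - 1)) then
          X (⟨n - 2, by omega⟩ : Fin (n + 1)) ^ a (n - 2) else 0) := by
    intro i
    rw [pd_term]
    by_cases h2 : (i : ℕ) = n - 2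
    · have hne : ¬ (n - 2 = n - 1) := by omega
      have heq : n - 2 + 1 = n - 1 := by omega
      have hi : i = (⟨n - 2, by omega⟩ : Fin (n - 1)) := Fin.ext (by simp [h2])
      rw [hi]
      simp [Fin.castLE_mk, Fin.succ_mk, Fin.ext_iff, hne, heq]
    · have hne1 : ¬ ((i : ℕ) = n - 1) := by omega
      simp [Fin.ext_iff, hne1, h2]
      omega
  rw [Finset.sum_congr rfl (fun i _ => hsum i)]
  simp only [Finset.sum_ite_eq', Finset.mem_univ, if_true]

private lemma aux_chain (n : ℕ) (a : ℕ → ℕ) (b : ℕ) (hn : 2 ≤ n)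
    (ha : ∀ i < n, 2 ≤ a i)
    (W : MvPolynomial (Fin (n + 1)) ℂ)
    (hW : W = (∑ i : Fin (n - 1),
        X (Fin.castLE (by omega) i) ^ a (i : ℕ) * X (Fin.castLE (by omega) i.succ))
      + X (⟨n - 1, by omega⟩ : Fin (n + 1)) ^ a (n - 1)
          * X (⟨0, by omega⟩ : Fin (n + 1)) * X (Fin.last n) ^ b)
    (I : Ideal (MvPolynomial (Fin (n + 1)) ℂ))
    (hD : ∀ j : Fin (n + 1), pderiv j W ∈ I)
    (hT : (a (n - 1) : MvPolynomial (Fin (n + 1)) ℂ)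
        * X (⟨n - 1, by omega⟩ : Fin (n + 1)) ^ (a (n - 1) - 1)
        * X (⟨0, by omega⟩ : Fin (n + 1)) * X (Fin.last n) ^ b ∈ I.radical) :
    ∀ m, m < n - 1 → ∀ (h : m < n + 1), X (⟨m, h⟩ : Fin (n + 1)) ∈ I.radical := by
  have key : ∀ k, k ≤ n - 2 → ∀ (h : n - 2 - k < n + 1),
      X (⟨n - 2 - k, h⟩ : Fin (n + 1)) ∈ I.radical := by
    intro k
    induction k with
    | zero =>
      intro _ h
      have hbase : (X (⟨n - 2, by omega⟩ : Fin (n + 1)) : MvPolynomial (Fin (n + 1)) ℂ)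
          ^ a (n - 2) ∈ I.radical := by
        have heq : (X (⟨n - 2, by omega⟩ : Fin (n + 1)) : MvPolynomial (Fin (n + 1)) ℂ)
            ^ a (n - 2) = pderiv (⟨n - 1, by omega⟩ : Fin (n + 1)) W
              - (a (n - 1) : MvPolynomial (Fin (n + 1)) ℂ)
                * X (⟨n - 1, by omega⟩ : Fin (n + 1)) ^ (a (n - 1) - 1)
                * X (⟨0, by omega⟩ : Fin (n + 1)) * X (Fin.last n) ^ b := by
          rw [deriv_last n a b W hW hn]; ring
        rw [heq]
        exact Ideal.sub_mem _ (Ideal.le_radical (hD _)) hT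
      have : (⟨n - 2 - 0, h⟩ : Fin (n + 1)) = ⟨n - 2, by omega⟩ := Fin.ext (by simp)
      rw [this]
      exact Ideal.mem_radical_of_pow_mem hbase
    | succ k ih =>
      intro hk h
      have hk' : k ≤ n - 2 := by omega
      have hx := ih hk' (by omega)
      set q := n - 2 - k with hq
      have hq1 : 1 ≤ q := by omega
      have hq2 : q ≤ n - 2 := by omega
      have haq : 2 ≤ a q := ha q (by omega)
      have hterm : (a q : MvPolynomial (Fin (n + 1)) ℂ)
          * X (⟨q, by omega⟩ : Fin (n + 1)) ^ (a q - 1)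
          * X (⟨q + 1, by omega⟩ : Fin (n + 1)) ∈ I.radical := by
        have e : (a q : MvPolynomial (Fin (n + 1)) ℂ)
            * X (⟨q, by omega⟩ : Fin (n + 1)) ^ (a q - 1)
            * X (⟨q + 1, by omega⟩ : Fin (n + 1))
          = ((a q : MvPolynomial (Fin (n + 1)) ℂ)
            * X (⟨q, by omega⟩ : Fin (n + 1)) ^ (a q - 2)
            * X (⟨q + 1, by omega⟩ : Fin (n + 1))) * X (⟨q, by omega⟩ : Fin (n + 1)) := by
          rw [show a q - 1 = (a q - 2) + 1 by omega, pow_succ]; ring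
        rw [e]
        exact Ideal.mul_mem_left _ _ hx
      have hpow : (X (⟨q - 1, by omega⟩ : Fin (n + 1)) : MvPolynomial (Fin (n + 1)) ℂ)
          ^ a (q - 1) ∈ I.radical := by
        have heq : (X (⟨q - 1, by omega⟩ : Fin (n + 1)) : MvPolynomial (Fin (n + 1)) ℂ)
            ^ a (q - 1) = pderiv (⟨q, by omega⟩ : Fin (n + 1)) W
              - (a q : MvPolynomial (Fin (n + 1)) ℂ)
                * X (⟨q, by omega⟩ : Fin (n + 1)) ^ (a q - 1)
                * X (⟨q + 1, by omega⟩ : Fin (n + 1)) := by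
          rw [deriv_mid n a b W hW hq1 hq2 hn]; ring
        rw [heq]
        exact Ideal.sub_mem _ (Ideal.le_radical (hD _)) hterm
      have : (⟨n - 2 - (k + 1), h⟩ : Fin (n + 1)) = ⟨q - 1, by omega⟩ := by
        simp only [Fin.mk.injEq]; omega
      rw [this]
      exact Ideal.mem_radical_of_pow_mem hpow
  intro m hm h
  have : (⟨m, h⟩ : Fin (n + 1)) = ⟨n - 2 - (n - 2 - m), by omega⟩ := by
    simp only [Fin.mk.injEq]; omega
  rw [this]
  exact key (n - 2 - m) (by omega) _

/-- For `W = x₁^{a₁}x₂ + ⋯ + x_{n-1}^{a_{n-1}}xₙ + xₙ^{aₙ}x₁x_{n+1}^{b}` with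
`aᵢ, b ≥ 2` (variables `x₁,…,x_{n+1}` indexed by `Fin (n+1)`, zero-based), the
radical of the ideal generated by the partial derivatives of `W` together with
`x_{n+1}` contains `x₁,…,x_{n-1}`, and likewise for `xₙ` in place of `x_{n+1}`. -/
theorem vars_in_radical (n : ℕ) (hn : 1 ≤ n) (a : ℕ → ℕ) (b : ℕ)
    (ha : ∀ i < n, 2 ≤ a i) (hb : 2 ≤ b)
    (W : MvPolynomial (Fin (n + 1)) ℂ)
    (hW : W = (∑ i : Fin (n - 1),
        X (Fin.castLE (by omega) i) ^ a (i : ℕ) * X (Fin.castLE (by omega) i.succ))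
      + X (⟨n - 1, by omega⟩ : Fin (n + 1)) ^ a (n - 1)
          * X (⟨0, by omega⟩ : Fin (n + 1)) * X (Fin.last n) ^ b) :
    ∀ m : ℕ, ∀ _hm : m < n - 1,
      (X (⟨m, by omega⟩ : Fin (n + 1)) ∈
        (Ideal.span ((Set.range fun j : Fin (n + 1) => pderiv j W)
          ∪ {X (Fin.last n)})).radical) ∧
      (X (⟨m, by omega⟩ : Fin (n + 1)) ∈
        (Ideal.span ((Set.range fun j : Fin (n + 1) => pderiv j W)
          ∪ {X (⟨n - 1, by omega⟩ : Fin (n + 1))})).radical) := by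
  intro m hm
  have hn2 : 2 ≤ n := by omega
  constructor
  · set I := Ideal.span ((Set.range fun j : Fin (n + 1) => pderiv j W)
      ∪ {X (Fin.last n)}) with hI
    have hD : ∀ j : Fin (n + 1), pderiv j W ∈ I :=
      fun j => Ideal.subset_span (Or.inl ⟨j, rfl⟩)
    have hXn : (X (Fin.last n) : MvPolynomial (Fin (n + 1)) ℂ) ∈ I :=
      Ideal.subset_span (Or.inr rfl)
    have hT : (a (n - 1) : MvPolynomial (Fin (n + 1)) ℂ)
        * X (⟨n - 1, by omega⟩ : Fin (n + 1)) ^ (a (n - 1) - 1)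
        * X (⟨0, by omega⟩ : Fin (n + 1)) * X (Fin.last n) ^ b ∈ I.radical := by
      have e : (a (n - 1) : MvPolynomial (Fin (n + 1)) ℂ)
          * X (⟨n - 1, by omega⟩ : Fin (n + 1)) ^ (a (n - 1) - 1)
          * X (⟨0, by omega⟩ : Fin (n + 1)) * X (Fin.last n) ^ b
        = ((a (n - 1) : MvPolynomial (Fin (n + 1)) ℂ)
          * X (⟨n - 1, by omega⟩ : Fin (n + 1)) ^ (a (n - 1) - 1)
          * X (⟨0, by omega⟩ : Fin (n + 1)) * X (Fin.last n) ^ (b - 1)) * X (Fin.last n) := by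
        conv_lhs => rw [show b = (b - 1) + 1 by omega]
        rw [pow_succ]; ring
      rw [e]
      exact Ideal.le_radical (Ideal.mul_mem_left _ _ hXn)
    exact aux_chain n a b hn2 ha W hW I hD hT m hm (by omega)
  · set I := Ideal.span ((Set.range fun j : Fin (n + 1) => pderiv j W)
      ∪ {X (⟨n - 1, by omega⟩ : Fin (n + 1))}) with hI
    have hD : ∀ j : Fin (n + 1), pderiv j W ∈ I :=
      fun j => Ideal.subset_span (Or.inl ⟨j, rfl⟩)
    have hXn : (X (⟨n - 1, by omega⟩ : Fin (n + 1)) : MvPolynomial (Fin (n + 1)) ℂ) ∈ I :=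
      Ideal.subset_span (Or.inr rfl)
    have hT : (a (n - 1) : MvPolynomial (Fin (n + 1)) ℂ)
        * X (⟨n - 1, by omega⟩ : Fin (n + 1)) ^ (a (n - 1) - 1)
        * X (⟨0, by omega⟩ : Fin (n + 1)) * X (Fin.last n) ^ b ∈ I.radical := by
      have han : 2 ≤ a (n - 1) := ha (n - 1) (by omega)
      have e : (a (n - 1) : MvPolynomial (Fin (n + 1)) ℂ)
          * X (⟨n - 1, by omega⟩ : Fin (n + 1)) ^ (a (n - 1) - 1)
          * X (⟨0, by omega⟩ : Fin (n + 1)) * X (Fin.last n) ^ b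
        = ((a (n - 1) : MvPolynomial (Fin (n + 1)) ℂ)
          * X (⟨n - 1, by omega⟩ : Fin (n + 1)) ^ (a (n - 1) - 2)
          * X (⟨0, by omega⟩ : Fin (n + 1)) * X (Fin.last n) ^ b)
            * X (⟨n - 1, by omega⟩ : Fin (n + 1)) := by
        rw [show a (n - 1) - 1 = (a (n - 1) - 2) + 1 by omega, pow_succ]; ring
      rw [e]
      exact Ideal.le_radical (Ideal.mul_mem_left _ _ hXn)
    exact aux_chain n a b hn2 ha W hW I hD hT m hm (by omega)
end

section
/- Let A_W be the n×(n+1) exponent matrix of W = x₁^{a₁}x₂ + ... + x_{n-1}^{a_{n-1}}xₙ + xₙ^{aₙ}x₁x_{n+1}^{b}. Then the signed maximal minors satisfy d₁ = (−1)ⁿ b, d_j = (−1)^{j+n+1} b ∏_{i=1}^{j-1} aᵢ for 2 ≤ j ≤ n, and d_{n+1} = a₁⋯aₙ + (−1)^{n+1}, where (−1)^{i+n+1}dᵢ is the determinant of A_W with column i deleted. -/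
open Finset

/-- The `n × (n+1)` exponent matrix of
`W = x₁^{a₁}x₂ + ⋯ + x_{n-1}^{a_{n-1}}xₙ + xₙ^{aₙ}x₁x_{n+1}^{b}` (zero-based):
rows indexed by the `n` monomials, columns by the `n+1` variables. -/
def loopChainExpMatrix (n : ℕ) (a : ℕ → ℤ) (b : ℤ) : Matrix (Fin n) (Fin (n + 1)) ℤ :=
  Matrix.of fun i j =>
    (if (j : ℕ) = (i : ℕ) then a (i : ℕ) else 0) +
      (if (i : ℕ) = n - 1 then
        (if (j : ℕ) = 0 then 1 else 0) + (if (j : ℕ) = n then b else 0)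
      else (if (j : ℕ) = (i : ℕ) + 1 then 1 else 0))

lemma loopChain_apply (n : ℕ) (a : ℕ → ℤ) (b : ℤ) (i : Fin n) (j : Fin (n+1)) :
    loopChainExpMatrix n a b i j =
      (if (j : ℕ) = (i : ℕ) then a (i : ℕ) else 0) +
        (if (i : ℕ) = n - 1 then
          (if (j : ℕ) = 0 then 1 else 0) + (if (j : ℕ) = n then b else 0)
        else (if (j : ℕ) = (i : ℕ) + 1 then 1 else 0)) := rfl

section entries

variable {n : ℕ} {a : ℕ → ℤ} {b : ℤ} (i : Fin n) (j : Fin (n+1))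

lemma loopChain_eq_zero (h1 : (j : ℕ) ≠ (i : ℕ))
    (h2 : (i : ℕ) = n - 1 → (j : ℕ) ≠ 0 ∧ (j : ℕ) ≠ n)
    (h3 : (i : ℕ) ≠ n - 1 → (j : ℕ) ≠ (i : ℕ) + 1) :
    loopChainExpMatrix n a b i j = 0 := by
  rw [loopChain_apply]
  by_cases hi : (i : ℕ) = n - 1
  · obtain ⟨ha, hb⟩ := h2 hi
    rw [if_neg h1, if_pos hi, if_neg ha, if_neg hb]; ring
  · rw [if_neg h1, if_neg hi, if_neg (h3 hi)]; ring

lemma loopChain_eq_diag (h1 : (j : ℕ) = (i : ℕ))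
    (h2 : (i : ℕ) = n - 1 → (j : ℕ) ≠ 0 ∧ (j : ℕ) ≠ n) :
    loopChainExpMatrix n a b i j = a (i : ℕ) := by
  rw [loopChain_apply]
  by_cases hi : (i : ℕ) = n - 1
  · obtain ⟨ha, hb⟩ := h2 hi
    rw [if_pos h1, if_pos hi, if_neg ha, if_neg hb]; ring
  · rw [if_pos h1, if_neg hi, if_neg (by omega)]; ring

lemma loopChain_eq_super (h1 : (i : ℕ) ≠ n - 1) (h2 : (j : ℕ) = (i : ℕ) + 1) :
    loopChainExpMatrix n a b i j = 1 := by
  rw [loopChain_apply, if_neg (by omega), if_neg h1, if_pos h2]; ring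

lemma loopChain_eq_corner (h0 : 2 ≤ n) (h1 : (i : ℕ) = n - 1) (h2 : (j : ℕ) = 0) :
    loopChainExpMatrix n a b i j = 1 := by
  rw [loopChain_apply, if_neg (by omega), if_pos h1, if_pos h2, if_neg (by omega)]; ring

lemma loopChain_eq_b (h0 : 1 ≤ n) (h1 : (i : ℕ) = n - 1) (h2 : (j : ℕ) = n) :
    loopChainExpMatrix n a b i j = b := by
  rw [loopChain_apply, if_neg (by omega), if_pos h1, if_neg (by omega), if_pos h2]; ring

end entries

lemma succAbove_val {n : ℕ} (c : Fin (n+1)) (k : Fin n) :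
    ((c.succAbove k : Fin (n+1)) : ℕ) = if (k:ℕ) < (c:ℕ) then (k:ℕ) else (k:ℕ)+1 := by
  rcases lt_or_ge (Fin.castSucc k) c with h | h
  · rw [Fin.succAbove_of_castSucc_lt _ _ h, if_pos (by simpa [Fin.lt_def] using h),
      Fin.coe_castSucc]
  · rw [Fin.succAbove_of_le_castSucc _ _ h, if_neg (by simpa [Fin.le_def, not_lt] using h),
      Fin.val_succ]

lemma succAbove_val_lt {n : ℕ} {c : Fin (n+1)} {k : Fin n} (h : (k:ℕ) < (c:ℕ)) :
    ((c.succAbove k : Fin (n+1)) : ℕ) = (k:ℕ) := by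
  rw [succAbove_val, if_pos h]

lemma succAbove_val_ge {n : ℕ} {c : Fin (n+1)} {k : Fin n} (h : (c:ℕ) ≤ (k:ℕ)) :
    ((c.succAbove k : Fin (n+1)) : ℕ) = (k:ℕ) + 1 := by
  rw [succAbove_val, if_neg (by omega)]

/-- The signed maximal minors of the exponent matrix of
`W = x₁^{a₁}x₂ + ⋯ + xₙ^{aₙ}x₁x_{n+1}^{b}` satisfy (1-based) `d₁ = (−1)ⁿ b`,
`d_j = (−1)^{j+n+1} b ∏_{i=1}^{j-1} aᵢ` for `2 ≤ j ≤ n` (which also yields `d₁`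
at `j = 1`), and `d_{n+1} = a₁⋯aₙ + (−1)^{n+1}`, where `(−1)^{i+n+1} dᵢ` is the
determinant of the matrix with column `i` deleted (zero-based column `c = i − 1`). -/
theorem loop_chain_minors (n : ℕ) (hn : 1 ≤ n) (a : ℕ → ℤ) (b : ℤ) :
    ∀ c : Fin (n + 1),
      ((loopChainExpMatrix n a b).submatrix id c.succAbove).det
        = (-1 : ℤ) ^ ((c : ℕ) + n) *
            (if (c : ℕ) < n then
              (-1 : ℤ) ^ ((c : ℕ) + n) * b * ∏ i ∈ range (c : ℕ), a i
            else (∏ i ∈ range n, a i) + (-1 : ℤ) ^ (n + 1)) := by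
  intro c
  set N := (loopChainExpMatrix n a b).submatrix id c.succAbove with hN
  have hNval : ∀ (i k : Fin n), N i k = loopChainExpMatrix n a b i (c.succAbove k) := by
    intro i k; rfl
  by_cases hc : (c : ℕ) < n
  · -- delete column c with c < n : determinant is b * ∏_{i<c} a i
    have key : N.det = (∏ i ∈ range (c : ℕ), a i) * b := by
      rw [Matrix.twoBlockTriangular_det' N (fun i : Fin n => (i : ℕ) < (c : ℕ))
        (by
          intro i hi j hj
          have hi' : (i : ℕ) < (c : ℕ) := hi
          have hj' : ¬ (j : ℕ) < (c : ℕ) := hj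
          rw [hNval]
          have hv : ((c.succAbove j : Fin (n+1)) : ℕ) = (j : ℕ) + 1 :=
            succAbove_val_ge (by omega)
          exact loopChain_eq_zero _ _ (by omega) (fun h => by omega) (fun h => by omega))]
      have h1 : (Matrix.toSquareBlockProp N fun i : Fin n => (i : ℕ) < (c : ℕ)).det
          = ∏ i ∈ range (c : ℕ), a i := by
        rw [Matrix.det_of_upperTriangular (by
          intro x y hxy
          have hyx : ((y : Fin n) : ℕ) < ((x : Fin n) : ℕ) := hxy
          have hx : ((x : Fin n) : ℕ) < (c : ℕ) := x.2
          have hy : ((y : Fin n) : ℕ) < (c : ℕ) := y.2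
          show N x y = 0
          rw [hNval]
          have hv : ((c.succAbove (y : Fin n) : Fin (n+1)) : ℕ) = ((y : Fin n) : ℕ) :=
            succAbove_val_lt hy
          exact loopChain_eq_zero _ _ (by omega) (fun h => by omega) (fun h => by omega))]
        have hdiag : ∀ x : {i : Fin n // (i : ℕ) < (c : ℕ)},
            (Matrix.toSquareBlockProp N fun i : Fin n => (i : ℕ) < (c : ℕ)) x x
              = a ((x : Fin n) : ℕ) := by
          intro x
          have hx : ((x : Fin n) : ℕ) < (c : ℕ) := x.2
          show N x x = _
          rw [hNval]
          have hv : ((c.succAbove (x : Fin n) : Fin (n+1)) : ℕ) = ((x : Fin n) : ℕ) :=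
            succAbove_val_lt hx
          exact loopChain_eq_diag _ _ (by omega) (fun h => by omega)
        rw [Finset.prod_congr rfl fun x _ => hdiag x]
        rw [← Finset.prod_subtype (Finset.univ.filter fun i : Fin n => (i : ℕ) < (c : ℕ))
          (by simp) (fun i : Fin n => a (i : ℕ))]
        refine Finset.prod_nbij' (fun x : Fin n => (x : ℕ))
          (fun i : ℕ => (⟨i % n, Nat.mod_lt _ (by omega)⟩ : Fin n)) ?_ ?_ ?_ ?_ ?_
        · intro x hx
          simp only [Finset.mem_filter] at hx
          exact Finset.mem_range.mpr hx.2
        · intro i hi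
          have hi' := Finset.mem_range.mp hi
          simp only [Finset.mem_filter]
          refine ⟨Finset.mem_univ _, ?_⟩
          show i % n < (c : ℕ)
          rw [Nat.mod_eq_of_lt (by omega)]; exact hi'
        · intro x hx
          simp only [Finset.mem_filter] at hx
          apply Fin.ext
          show (x : ℕ) % n = (x : ℕ)
          exact Nat.mod_eq_of_lt x.2
        · intro i hi
          have hi' := Finset.mem_range.mp hi
          show (i % n) = i
          exact Nat.mod_eq_of_lt (by omega)
        · intro x _; rfl
      have h2 : (Matrix.toSquareBlockProp N fun i : Fin n => ¬ (i : ℕ) < (c : ℕ)).det = b := by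
        rw [Matrix.det_of_lowerTriangular _ (by
          intro x y hxy
          have hyx : ((x : Fin n) : ℕ) < ((y : Fin n) : ℕ) := hxy
          have hx : ¬ ((x : Fin n) : ℕ) < (c : ℕ) := x.2
          have hxn := (x : Fin n).2
          have hyn := (y : Fin n).2
          show N x y = 0
          rw [hNval]
          have hv : ((c.succAbove (y : Fin n) : Fin (n+1)) : ℕ) = ((y : Fin n) : ℕ) + 1 :=
            succAbove_val_ge (by omega)
          exact loopChain_eq_zero _ _ (by omega) (fun h => by omega) (fun h => by omega))]
        have hmem : ¬ ((⟨n - 1, by omega⟩ : Fin n) : ℕ) < (c : ℕ) := by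
          show ¬ n - 1 < (c : ℕ); omega
        refine (Fintype.prod_eq_single (⟨⟨n-1, by omega⟩, hmem⟩ :
            {i : Fin n // ¬ (i : ℕ) < (c : ℕ)}) ?_).trans ?_
        · intro x hx
          have hx2 : ¬ ((x : Fin n) : ℕ) < (c : ℕ) := x.2
          have hxn := (x : Fin n).2
          have hxne : ((x : Fin n) : ℕ) ≠ n - 1 := by
            intro h
            exact hx (Subtype.ext (Fin.ext h))
          show N x x = 1
          rw [hNval]
          have hv : ((c.succAbove (x : Fin n) : Fin (n+1)) : ℕ) = ((x : Fin n) : ℕ) + 1 :=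
            succAbove_val_ge (by omega)
          exact loopChain_eq_super _ _ (by omega) (by omega)
        · show N ⟨n-1, by omega⟩ ⟨n-1, by omega⟩ = b
          rw [hNval]
          have hv : ((c.succAbove (⟨n-1, by omega⟩ : Fin n) : Fin (n+1)) : ℕ)
              = ((⟨n-1, by omega⟩ : Fin n) : ℕ) + 1 := succAbove_val_ge (by omega)
          have hval : ((⟨n-1, by omega⟩ : Fin n) : ℕ) = n - 1 := rfl
          exact loopChain_eq_b _ _ hn (by omega) (by omega)
      rw [h1, h2]
    rw [key, if_pos hc]
    have h1 : ((-1 : ℤ) ^ ((c : ℕ) + n)) * ((-1 : ℤ) ^ ((c : ℕ) + n)) = 1 := by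
      rw [← pow_add]; exact Even.neg_one_pow ⟨(c : ℕ) + n, rfl⟩
    rw [← mul_assoc, ← mul_assoc, h1, one_mul, mul_comm]
  · -- c = n : determinant is ∏ a + (-1)^(n+1)
    have hcn : (c : ℕ) = n := le_antisymm (Nat.lt_succ_iff.mp c.2) (le_of_not_gt hc)
    rw [if_neg hc]
    have hpow : (-1 : ℤ) ^ ((c : ℕ) + n) = 1 := by
      rw [hcn]; exact Even.neg_one_pow ⟨n, rfl⟩
    rw [hpow, one_mul]
    obtain ⟨m, rfl⟩ : ∃ m, n = m + 1 := ⟨n - 1, by omega⟩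
    have hcol : ∀ k : Fin (m+1), ((c.succAbove k : Fin (m+2)) : ℕ) = (k : ℕ) :=
      fun k => succAbove_val_lt (by omega)
    by_cases hm : m = 0
    · subst hm
      have h00 : ((c.succAbove 0 : Fin 2) : ℕ) = 0 := by rw [hcol]; rfl
      rw [show N.det = N 0 0 from Matrix.det_fin_one N, hNval, loopChain_apply, h00]
      norm_num
    · rw [Matrix.det_succ_column_zero, Fin.sum_univ_succ]
      have hminor0 : (N.submatrix Fin.succ Fin.succ).det
          = ∏ r : Fin m, a ((r : ℕ) + 1) := by
        rw [Matrix.det_of_upperTriangular (by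
          intro r k hk
          have hk' : (k : ℕ) < (r : ℕ) := hk
          have hr := r.2
          have hk2 := k.2
          show N (Fin.succ r) (Fin.succ k) = 0
          rw [hNval]
          have hcv : ((c.succAbove (Fin.succ k) : Fin (m+2)) : ℕ) = (k : ℕ) + 1 := by
            rw [hcol, Fin.val_succ]
          refine loopChain_eq_zero _ _ ?_ ?_ ?_
          · rw [hcv, Fin.val_succ]; omega
          · intro h; rw [hcv]; omega
          · intro h; rw [hcv, Fin.val_succ]; omega)]
        refine Finset.prod_congr rfl fun r _ => ?_
        show N (Fin.succ r) (Fin.succ r) = _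
        rw [hNval]
        have hr := r.2
        have hcv : ((c.succAbove (Fin.succ r) : Fin (m+2)) : ℕ) = (r : ℕ) + 1 := by
          rw [hcol, Fin.val_succ]
        rw [loopChain_eq_diag _ _ (by rw [hcv, Fin.val_succ])
          (fun h => by rw [hcv]; omega), Fin.val_succ]
      have hminorlast : (N.submatrix (Fin.last m).succAbove Fin.succ).det = 1 := by
        rw [Matrix.det_of_lowerTriangular _ (by
          intro r k hk
          have hk' : (r : ℕ) < (k : ℕ) := hk
          have hr := r.2
          have hk2 := k.2
          show N ((Fin.last m).succAbove r) (Fin.succ k) = 0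
          rw [hNval]
          have hrow : (((Fin.last m).succAbove r : Fin (m+1)) : ℕ) = (r : ℕ) :=
            succAbove_val_lt (by simpa using r.2)
          have hcv : ((c.succAbove (Fin.succ k) : Fin (m+2)) : ℕ) = (k : ℕ) + 1 := by
            rw [hcol, Fin.val_succ]
          exact loopChain_eq_zero _ _ (by omega) (fun h => by omega) (fun h => by omega))]
        refine Finset.prod_eq_one fun r _ => ?_
        show N ((Fin.last m).succAbove r) (Fin.succ r) = 1
        rw [hNval]
        have hr := r.2
        have hrow : (((Fin.last m).succAbove r : Fin (m+1)) : ℕ) = (r : ℕ) :=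
          succAbove_val_lt (by simpa using r.2)
        have hcv : ((c.succAbove (Fin.succ r) : Fin (m+2)) : ℕ) = (r : ℕ) + 1 := by
          rw [hcol, Fin.val_succ]
        exact loopChain_eq_super _ _ (by omega) (by omega)
      have hN00 : N 0 0 = a 0 := by
        rw [hNval]
        have hcv : ((c.succAbove (0 : Fin (m+1)) : Fin (m+2)) : ℕ) = 0 := by
          rw [hcol]; rfl
        have h0 : ((0 : Fin (m+1)) : ℕ) = 0 := rfl
        rw [loopChain_eq_diag _ _ (by omega) (fun h => by omega), h0]
      have hsum : (∑ i : Fin m, (-1 : ℤ) ^ ((Fin.succ i : Fin (m+1)) : ℕ)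
            * N (Fin.succ i) 0
            * (N.submatrix (Fin.succ i).succAbove Fin.succ).det)
          = (-1 : ℤ) ^ m := by
        have hml : Fin.succ (⟨m - 1, by omega⟩ : Fin m) = Fin.last m :=
          Fin.ext (by simp; omega)
        rw [Fintype.sum_eq_single (⟨m - 1, by omega⟩ : Fin m) (by
          intro x hx
          have hx2 := x.2
          have hxne : (x : ℕ) ≠ m - 1 := fun h => hx (Fin.ext h)
          have hzero : N (Fin.succ x) 0 = 0 := by
            rw [hNval]
            have hcv : ((c.succAbove (0 : Fin (m+1)) : Fin (m+2)) : ℕ) = 0 := by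
              rw [hcol]; rfl
            have hrow : ((Fin.succ x : Fin (m+1)) : ℕ) = (x : ℕ) + 1 := Fin.val_succ x
            exact loopChain_eq_zero _ _ (by omega) (fun h => by omega) (fun h => by omega)
          rw [hzero]; ring)]
        rw [hml, hminorlast]
        have hlast0 : N (Fin.last m) 0 = 1 := by
          rw [hNval]
          have hcv : ((c.succAbove (0 : Fin (m+1)) : Fin (m+2)) : ℕ) = 0 := by
            rw [hcol]; rfl
          have hrow : ((Fin.last m : Fin (m+1)) : ℕ) = m := rfl
          exact loopChain_eq_corner _ _ (by omega) (by omega) (by rw [hcv])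
        rw [hlast0, Fin.val_last]
        ring
      rw [hsum, Fin.succAbove_zero, hminor0, hN00]
      have hprod : ∏ i ∈ range (m + 1), a i
          = a 0 * ∏ r : Fin m, a ((r : ℕ) + 1) := by
        rw [Finset.prod_range_succ', mul_comm, Fin.prod_univ_eq_prod_range (fun i => a (i + 1)) m]
      rw [hprod]
      have hp2 : (-1 : ℤ) ^ (m + 1 + 1) = (-1 : ℤ) ^ m := by
        rw [pow_succ, pow_succ]; ring
      rw [hp2, Fin.val_zero, pow_zero, one_mul]
end

section
/- Let w be an invertible quasihomogeneous polynomial with exponent matrix A ∈ GLₙ(ℚ) (integer entries), and suppose the transposed polynomial wᵀ is quasihomogeneous with positive integer weights r₁,...,rₙ and degree dᵀ, so that rᵢ = dᵀ·Σ_{j=1}^{n}(A^{-1})_{ji}. For the interpolating polynomial built by replacing the last monomial with its x_{n+1}^{b}-modification, the minors satisfy d_{n+1} = det A and d_j = −b·det A·(A^{-1})_{jn} for 1 ≤ j ≤ n, and hence Σ_{j=1}^{n+1} d_j = det A · (1 − b·rₙ/dᵀ). In particular, if b = dᵀ/rₙ is an integer then Σ_j d_j = 0. -/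
open Finset

/-- The augmented `n × (n+1)` exponent matrix (over `ℚ`) of the interpolating
polynomial `W`, obtained from the invertible exponent matrix `A` of `w` by
multiplying the `n`-th (last) monomial by `x_{n+1}^{b}`: the first `n` columns
are those of `A` and the last column is `b` times the last standard basis
vector. -/
noncomputable def augExpMatrix (n : ℕ) (hn : 1 ≤ n) (A : Matrix (Fin n) (Fin n) ℤ)
    (b : ℤ) : Matrix (Fin n) (Fin (n + 1)) ℚ :=
  Matrix.of fun i j =>
    if h : (j : ℕ) < n then ((A i ⟨(j : ℕ), h⟩ : ℤ) : ℚ)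
    else if i = (⟨n - 1, by omega⟩ : Fin n) then (b : ℚ) else 0

/-- The signed maximal minor `dᵢ` of the augmented matrix, deleting the
(zero-based) column `c`, with sign convention `det(minorᵢ) = (−1)^{i+n+1} dᵢ`
(1-based `i = c + 1`). -/
noncomputable def signedMinor (n : ℕ) (hn : 1 ≤ n) (A : Matrix (Fin n) (Fin n) ℤ)
    (b : ℤ) (c : Fin (n + 1)) : ℚ :=
  (-1 : ℚ) ^ ((c : ℕ) + n) * ((augExpMatrix n hn A b).submatrix id c.succAbove).det

/-! Deleting the last column of the augmented matrix leaves `A`. Deleting column `j ≤ n` leaves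
the other columns of `A` followed by `b · eₙ`; expanding along that column gives `b` times the
minor of `A` without row `n` and column `j`, which up to sign is the adjugate entry
`adj(A)_{jn} = det A · (A⁻¹)_{jn}`. In the sum, `Σ_j (A⁻¹)_{jn} = rₙ / dᵀ` is the definition of
the weight `rₙ`. -/

open Matrix

theorem Matrix.adjugate_eq_det_smul_inv {n R : Type*} [Fintype n] [DecidableEq n] [CommRing R]
    {M : Matrix n n R} (h : IsUnit M.det) : M.adjugate = M.det • M⁻¹ := by
  rw [inv_def, smul_smul, Ring.mul_inverse_cancel _ h, one_smul]

theorem Matrix.det_eq_mul_det_submatrix_castSucc_of_col_last {R : Type*} [CommRing R] {m : ℕ}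
    (B : Matrix (Fin (m + 1)) (Fin (m + 1)) R) (β : R)
    (hB : ∀ i, B i (Fin.last m) = (Pi.single (Fin.last m) β : Fin (m + 1) → R) i) :
    B.det = β * (B.submatrix Fin.castSucc Fin.castSucc).det := by
  rw [det_succ_column B (Fin.last m), Fintype.sum_eq_single (Fin.last m)]
  · simp [hB, Fin.succAbove_last, ← two_mul, pow_mul]
  · intro i hi
    simp [hB, hi]

section augExpMatrix

variable {m : ℕ} (hn : 1 ≤ m + 1) (A : Matrix (Fin (m + 1)) (Fin (m + 1)) ℤ) (b : ℤ)

theorem augExpMatrix_castSucc (i : Fin (m + 1)) (k : Fin (m + 1)) :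
    augExpMatrix (m + 1) hn A b i k.castSucc = A i k := by
  simp only [augExpMatrix, of_apply, Fin.val_castSucc, dif_pos k.isLt]

theorem augExpMatrix_last (i : Fin (m + 1)) :
    augExpMatrix (m + 1) hn A b i (Fin.last (m + 1))
      = (Pi.single (Fin.last m) (b : ℚ) : Fin (m + 1) → ℚ) i := by
  simp only [augExpMatrix, of_apply, Fin.val_last, lt_irrefl, dite_false, Pi.single_apply]
  rfl

theorem signedMinor_last :
    signedMinor (m + 1) hn A b (Fin.last (m + 1)) = (A.map ((↑·) : ℤ → ℚ)).det := by
  have h : (augExpMatrix (m + 1) hn A b).submatrix id Fin.castSucc = A.map ((↑·) : ℤ → ℚ) := by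
    ext i k
    simp [augExpMatrix_castSucc]
  simp [signedMinor, Fin.succAbove_last, h, ← two_mul, pow_mul]

theorem signedMinor_castSucc (j : Fin (m + 1)) :
    signedMinor (m + 1) hn A b j.castSucc
      = -(b : ℚ) * (A.map ((↑·) : ℤ → ℚ)).adjugate j (Fin.last m) := by
  rw [signedMinor, det_eq_mul_det_submatrix_castSucc_of_col_last _ (b : ℚ),
    adjugate_fin_succ_eq_det_submatrix]
  · have h : ((augExpMatrix (m + 1) hn A b).submatrix id j.castSucc.succAbove).submatrix
          Fin.castSucc Fin.castSucc
        = (A.map ((↑·) : ℤ → ℚ)).submatrix (Fin.last m).succAbove j.succAbove := by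
      ext i k
      simp [Fin.succAbove_last, augExpMatrix_castSucc]
    rw [h, Fin.val_castSucc, Fin.val_last, ← add_assoc, pow_succ, add_comm (j : ℕ)]
    ring
  · intro i
    simp [augExpMatrix_last]

end augExpMatrix

/-- Cramer's rule computation for the minors of the interpolating polynomial:
`d_{n+1} = det A`, `d_j = −b · det A · (A⁻¹)_{jn}`, hence
`Σ_j d_j = det A · (1 − b rₙ / dᵀ)` where `rᵢ = dᵀ Σ_j (A⁻¹)_{ji}` are the
weights of `wᵀ`; in particular if `b · rₙ = dᵀ` then `Σ_j d_j = 0`. -/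
theorem aug_minors_and_sum (n : ℕ) (hn : 1 ≤ n) (A : Matrix (Fin n) (Fin n) ℤ)
    (hA : IsUnit ((A.map ((↑·) : ℤ → ℚ)).det)) (b : ℤ)
    (dT : ℤ) (hdT : 0 < dT) (r : Fin n → ℤ)
    (hr : ∀ i : Fin n, (r i : ℚ) = (dT : ℚ) * ∑ j : Fin n, (A.map ((↑·) : ℤ → ℚ))⁻¹ j i) :
    signedMinor n hn A b (Fin.last n) = (A.map ((↑·) : ℤ → ℚ)).det ∧
    (∀ j : Fin n, signedMinor n hn A b j.castSucc
        = -(b : ℚ) * (A.map ((↑·) : ℤ → ℚ)).det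
            * (A.map ((↑·) : ℤ → ℚ))⁻¹ j (⟨n - 1, by omega⟩ : Fin n)) ∧
    (∑ c : Fin (n + 1), signedMinor n hn A b c
        = (A.map ((↑·) : ℤ → ℚ)).det
            * (1 - (b : ℚ) * (r (⟨n - 1, by omega⟩ : Fin n) : ℚ) / (dT : ℚ))) ∧
    ((b : ℤ) * r (⟨n - 1, by omega⟩ : Fin n) = dT →
      ∑ c : Fin (n + 1), signedMinor n hn A b c = 0) := by
  obtain ⟨m, rfl⟩ : ∃ m, n = m + 1 := ⟨n - 1, by omega⟩
  set M := A.map ((↑·) : ℤ → ℚ)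
  have hd (j : Fin (m + 1)) :
      signedMinor (m + 1) hn A b j.castSucc = -(b : ℚ) * M.det * M⁻¹ j (Fin.last m) := by
    rw [signedMinor_castSucc, adjugate_eq_det_smul_inv hA, Matrix.smul_apply, smul_eq_mul, mul_assoc]
  have hdT0 : (dT : ℚ) ≠ 0 := by positivity
  have hsum : ∑ c, signedMinor (m + 1) hn A b c
      = M.det * (1 - (b : ℚ) * (r (Fin.last m) : ℚ) / (dT : ℚ)) := by
    rw [Fin.sum_univ_castSucc, signedMinor_last]
    simp_rw [hd]
    rw [← Finset.mul_sum, hr (Fin.last m)]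
    field_simp
    ring
  refine ⟨signedMinor_last hn A b, hd, hsum, fun (h : b * r (Fin.last m) = dT) => ?_⟩
  rw [hsum, ← Int.cast_mul, h, div_self hdT0, sub_self, mul_zero]
end
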